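/- Let d_Ω, d_U be C² functions on an open set W ⊆ ℝ^N, let X₀ be a C¹ vector field on W, and define X = (I − ∇d_Ω ⊗ ∇d_Ω)∇d_U + d_Ω X₀. Suppose at a point y ∈ W we have d_Ω(y) = 0, |∇d_Ω(y)| = 1, and (∇²d_Ω(y))∇d_Ω(y) = 0. Then at y: (∇²d_Ω)X − (∇X)ᵀ∇d_Ω = (∇²d_Ω)∇d_U − (I − ∇d_Ω ⊗ ∇d_Ω)(∇²d_U)∇d_Ω − X₀. -/

import Mathlib

/-!
Everything is read off from directional derivatives along `ν = ∇d_Ω(y)`. The Jacobian applied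
to `ν` is `∂_ν X`, and by the product rule, using `d_Ω(y) = 0`, `∂_ν ∇d_Ω = (∇²d_Ω) ν = 0` and
`∂_ν d_Ω = |ν|² = 1`, one gets `∂_ν X = (I − ν ⊗ ν)(∇²d_U) ν + X₀`. On the other side
`X(y) = ∇d_U − ⟨ν, ∇d_U⟩ ν`, so `(∇²d_Ω) X = (∇²d_Ω) ∇d_U`.
-/

/-- The Hessian matrix of `d`, `(∂_j (∂_i d))_{i j}`. -/
noncomputable def hessian (N : ℕ) (d : EuclideanSpace ℝ (Fin N) → ℝ)
    (x : EuclideanSpace ℝ (Fin N)) : Matrix (Fin N) (Fin N) ℝ :=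
  fun i j => fderiv ℝ (fun y => gradient d y i) x (EuclideanSpace.single j 1)

/-- The Jacobian matrix `∇X = (∂_i X^j)_{i j}` of a vector field `X`. -/
noncomputable def gradMat (N : ℕ)
    (X : EuclideanSpace ℝ (Fin N) → EuclideanSpace ℝ (Fin N))
    (x : EuclideanSpace ℝ (Fin N)) : Matrix (Fin N) (Fin N) ℝ :=
  fun i j => fderiv ℝ (fun y => X y j) x (EuclideanSpace.single i 1)

open InnerProductSpace Matrix

section InnerProduct

variable {E F : Type*} [NormedAddCommGroup E] [NormedSpace ℝ E]
  [NormedAddCommGroup F] [InnerProductSpace ℝ F]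

theorem ContDiffAt.differentiableAt_gradient [CompleteSpace F] {f : F → ℝ} {x : F}
    (hf : ContDiffAt ℝ 2 f x) : DifferentiableAt ℝ (gradient f) x :=
  ((toDual ℝ F).symm.contDiff.contDiffAt.comp x
    (hf.fderiv_right (m := 1) (by norm_num))).differentiableAt one_ne_zero

theorem fderiv_sub_inner_smul_add_smul_apply {u p Z : E → F} {φ : E → ℝ} {x v : E}
    (hu : DifferentiableAt ℝ u x) (hp : DifferentiableAt ℝ p x)
    (hφ : DifferentiableAt ℝ φ x) (hZ : DifferentiableAt ℝ Z x)
    (hpv : fderiv ℝ p x v = 0) (hφx : φ x = 0) :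
    fderiv ℝ (fun y => u y - ⟪p y, u y⟫_ℝ • p y + φ y • Z y) x v =
      fderiv ℝ u x v - ⟪p x, fderiv ℝ u x v⟫_ℝ • p x + fderiv ℝ φ x v • Z x := by
  have hc : DifferentiableAt ℝ (fun y => ⟪p y, u y⟫_ℝ) x := hp.inner ℝ hu
  have hderiv : HasFDerivAt (fun y => u y - ⟪p y, u y⟫_ℝ • p y + φ y • Z y)
      (fderiv ℝ u x - (⟪p x, u x⟫_ℝ • fderiv ℝ p x +
          (fderiv ℝ (fun y => ⟪p y, u y⟫_ℝ) x).smulRight (p x)) +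
        (φ x • fderiv ℝ Z x + (fderiv ℝ φ x).smulRight (Z x))) x :=
    (hu.hasFDerivAt.sub (hc.hasFDerivAt.smul hp.hasFDerivAt)).add
      (hφ.hasFDerivAt.smul hZ.hasFDerivAt)
  rw [hderiv.fderiv]
  simp [fderiv_inner_apply ℝ hp hu, hpv, hφx]

end InnerProduct

section Jacobian

variable {M N : ℕ}

noncomputable def jacobian (F : EuclideanSpace ℝ (Fin M) → EuclideanSpace ℝ (Fin N))
    (x : EuclideanSpace ℝ (Fin M)) : Matrix (Fin N) (Fin M) ℝ :=
  fun i j => fderiv ℝ (fun y => F y i) x (EuclideanSpace.single j 1)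

theorem hessian_eq_jacobian_gradient (d : EuclideanSpace ℝ (Fin N) → ℝ)
    (x : EuclideanSpace ℝ (Fin N)) : hessian N d x = jacobian (gradient d) x := rfl

theorem gradMat_eq_transpose_jacobian
    (X : EuclideanSpace ℝ (Fin N) → EuclideanSpace ℝ (Fin N)) (x : EuclideanSpace ℝ (Fin N)) :
    gradMat N X x = (jacobian X x)ᵀ := rfl

theorem jacobian_mulVec {F : EuclideanSpace ℝ (Fin M) → EuclideanSpace ℝ (Fin N)}
    {x : EuclideanSpace ℝ (Fin M)} (hF : DifferentiableAt ℝ F x)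
    (v : EuclideanSpace ℝ (Fin M)) : jacobian F x *ᵥ v.ofLp = (fderiv ℝ F x v).ofLp := by
  ext i
  have hcoord : HasFDerivAt (fun y => F y i) ((PiLp.proj 2 _ i).comp (fderiv ℝ F x)) x :=
    (PiLp.hasFDerivAt_apply (𝕜 := ℝ) 2 (F x) i).comp x hF.hasFDerivAt
  conv_rhs => rw [← (EuclideanSpace.basisFun (Fin M) ℝ).sum_repr v]
  simp [jacobian, Matrix.mulVec, dotProduct, hcoord.fderiv, mul_comm]

end Jacobian

theorem stmt10_general (N : ℕ)
    (W : Set (EuclideanSpace ℝ (Fin N))) (hW : IsOpen W)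
    (dΩ dU : EuclideanSpace ℝ (Fin N) → ℝ)
    (hdΩ : ContDiffOn ℝ 2 dΩ W) (hdU : ContDiffOn ℝ 2 dU W)
    (X₀ : EuclideanSpace ℝ (Fin N) → EuclideanSpace ℝ (Fin N))
    (hX₀ : ContDiffOn ℝ 1 X₀ W)
    (X : EuclideanSpace ℝ (Fin N) → EuclideanSpace ℝ (Fin N))
    (hX : ∀ x, X x = (gradient dU x -
        (inner ℝ (gradient dΩ x) (gradient dU x) : ℝ) • gradient dΩ x) +
        dΩ x • X₀ x)
    (y : EuclideanSpace ℝ (Fin N)) (hy : y ∈ W)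
    (hy0 : dΩ y = 0) (hunit : ‖gradient dΩ y‖ = 1)
    (hhess : (hessian N dΩ y).mulVec (fun j => gradient dΩ y j) = 0) :
    (hessian N dΩ y).mulVec (fun j => X y j) -
        (gradMat N X y).transpose.mulVec (fun j => gradient dΩ y j) =
      (hessian N dΩ y).mulVec (fun j => gradient dU y j) -
        ((1 : Matrix (Fin N) (Fin N) ℝ) -
            Matrix.vecMulVec (fun i => gradient dΩ y i) (fun i => gradient dΩ y i)).mulVec
          ((hessian N dU y).mulVec (fun j => gradient dΩ y j)) -
        (fun i => X₀ y i) := by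
  have hWy : W ∈ nhds y := hW.mem_nhds hy
  have hgradΩ := (hdΩ.contDiffAt hWy).differentiableAt_gradient
  have hgradU := (hdU.contDiffAt hWy).differentiableAt_gradient
  have hdΩy : DifferentiableAt ℝ dΩ y := (hdΩ.contDiffAt hWy).differentiableAt two_ne_zero
  have hX₀y : DifferentiableAt ℝ X₀ y := (hX₀.contDiffAt hWy).differentiableAt one_ne_zero
  have hXy : DifferentiableAt ℝ X y := by
    rw [show X = _ from funext hX]
    exact (hgradU.sub ((hgradΩ.inner ℝ hgradU).smul hgradΩ)).add (hdΩy.smul hX₀y)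
  set ν := gradient dΩ y
  have hHν : fderiv ℝ (gradient dΩ) y ν = 0 := by
    rw [hessian_eq_jacobian_gradient, jacobian_mulVec hgradΩ] at hhess
    exact WithLp.ofLp_injective 2 hhess
  have hdΩν : fderiv ℝ dΩ y ν = 1 := by
    rw [← toDual_gradient, toDual_apply_apply, real_inner_self_eq_norm_sq, hunit, one_pow]
  have hDX : fderiv ℝ X y ν =
      fderiv ℝ (gradient dU) y ν - ⟪ν, fderiv ℝ (gradient dU) y ν⟫_ℝ • ν + X₀ y := by
    rw [show X = _ from funext hX, fderiv_sub_inner_smul_add_smul_apply hgradU hgradΩ hdΩy hX₀y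
      hHν hy0, hdΩν, one_smul]
  have hHX : fderiv ℝ (gradient dΩ) y (X y) = fderiv ℝ (gradient dΩ) y (gradient dU y) := by
    rw [hX y, hy0, zero_smul, add_zero, map_sub, map_smul, hHν, smul_zero, sub_zero]
  rw [gradMat_eq_transpose_jacobian, transpose_transpose, hessian_eq_jacobian_gradient,
    hessian_eq_jacobian_gradient, jacobian_mulVec hXy, jacobian_mulVec hgradΩ,
    jacobian_mulVec hgradΩ, jacobian_mulVec hgradU, hHX, hDX, sub_mulVec, one_mulVec,
    vecMulVec_mulVec, op_smul_eq_smul, EuclideanSpace.inner_eq_star_dotProduct, star_trivial,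
    dotProduct_comm]
  ext i
  simp only [WithLp.ofLp_add, WithLp.ofLp_sub, WithLp.ofLp_smul, Pi.add_apply, Pi.sub_apply,
    Pi.smul_apply, smul_eq_mul]
  ring

/-- with `X = (I − ∇d_Ω⊗∇d_Ω)∇d_U + d_Ω X₀`, at a point `y`
where `d_Ω(y) = 0`, `|∇d_Ω(y)| = 1`, `(∇²d_Ω(y))∇d_Ω(y) = 0`, one has
`(∇²d_Ω)X − (∇X)ᵀ∇d_Ω = (∇²d_Ω)∇d_U − (I − ∇d_Ω⊗∇d_Ω)(∇²d_U)∇d_Ω − X₀`. -/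
theorem stmt10 (N : ℕ) (hN : 1 ≤ N)
    (W : Set (EuclideanSpace ℝ (Fin N))) (hW : IsOpen W)
    (dΩ dU : EuclideanSpace ℝ (Fin N) → ℝ)
    (hdΩ : ContDiffOn ℝ 2 dΩ W) (hdU : ContDiffOn ℝ 2 dU W)
    (X₀ : EuclideanSpace ℝ (Fin N) → EuclideanSpace ℝ (Fin N))
    (hX₀ : ContDiffOn ℝ 1 X₀ W)
    (X : EuclideanSpace ℝ (Fin N) → EuclideanSpace ℝ (Fin N))
    (hX : ∀ x, X x = (gradient dU x -
        (inner ℝ (gradient dΩ x) (gradient dU x) : ℝ) • gradient dΩ x) +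
        dΩ x • X₀ x)
    (y : EuclideanSpace ℝ (Fin N)) (hy : y ∈ W)
    (hy0 : dΩ y = 0) (hunit : ‖gradient dΩ y‖ = 1)
    (hhess : (hessian N dΩ y).mulVec (fun j => gradient dΩ y j) = 0) :
    (hessian N dΩ y).mulVec (fun j => X y j) -
        (gradMat N X y).transpose.mulVec (fun j => gradient dΩ y j) =
      (hessian N dΩ y).mulVec (fun j => gradient dU y j) -
        ((1 : Matrix (Fin N) (Fin N) ℝ) -
            Matrix.vecMulVec (fun i => gradient dΩ y i) (fun i => gradient dΩ y i)).mulVec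
          ((hessian N dU y).mulVec (fun j => gradient dΩ y j)) -
        (fun i => X₀ y i) :=
  stmt10_general N W hW dΩ dU hdΩ hdU X₀ hX₀ X hX y hy hy0 hunit hhess
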